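/- Let 0 < ρ < 1 and 0 < τ < ∞ be real numbers. The binomial series f(z) = Σ_{n=0}^∞ (eρτ/n)^{n/ρ} · z^{\underline{n}} (with the n = 0 term interpreted as 1) converges uniformly on every compact subset of ℂ, and the entire function f so defined has order of growth ρ(f) = ρ and type τ(f) = τ. -/

import Mathlib

open Filter Finset Topology

/-- The falling factorial `z(z-1)⋯(z-n+1)`. -/
noncomputable def ff (z : ℂ) (n : ℕ) : ℂ := ∏ k ∈ Finset.range n, (z - (k : ℂ))

/-- The maximum modulus `M(r,f) = max_{|z| ≤ r} |f(z)|`. -/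
noncomputable def maxMod (f : ℂ → ℂ) (r : ℝ) : ℝ :=
  sSup ((fun z => ‖f z‖) '' Metric.closedBall (0 : ℂ) r)

/-- The order of growth `ρ(f) = limsup_{r → ∞} log log M(r,f) / log r`. -/
noncomputable def growthOrder (f : ℂ → ℂ) : ℝ :=
  Filter.limsup (fun r : ℝ => Real.log (Real.log (maxMod f r)) / Real.log r) Filter.atTop

/-- The type `τ(f) = limsup_{r → ∞} log M(r,f) / r^ρ`, as an extended real number. -/
noncomputable def growthTypeE (f : ℂ → ℂ) (ρ : ℝ) : EReal :=
  Filter.limsup (fun r : ℝ => ((Real.log (maxMod f r) / r ^ ρ : ℝ) : EReal)) Filter.atTop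

/-- `χ((a_n)) = limsup_{n → ∞} (n log n)/(-log |a_n|)`. -/
noncomputable def chi (a : ℕ → ℂ) : ℝ :=
  Filter.limsup (fun n : ℕ => (n : ℝ) * Real.log n / (-Real.log ‖a n‖)) Filter.atTop

noncomputable def AB (ρ τ : ℝ) (n : ℕ) : ℝ :=
  if n = 0 then 1 else (Real.exp 1 * ρ * τ / n) ^ ((n : ℝ) / ρ)

lemma xlog {x : ℝ} (hx : 0 < x) : x * (1 - Real.log x) ≤ 1 := by
  have h := Real.log_le_sub_one_of_pos (x := 1/x) (by positivity)
  rw [Real.log_div one_ne_zero (ne_of_gt hx), Real.log_one] at h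
  have h5 : x * (1/x) = 1 := by field_simp
  nlinarith [mul_le_mul_of_nonneg_left h hx.le]

lemma AB_pos (ρ τ : ℝ) (hρ0 : 0 < ρ) (hτ0 : 0 < τ) (n : ℕ) : 0 < AB ρ τ n := by
  unfold AB
  split
  · norm_num
  · next h =>
    have hn' : (0:ℝ) < n := by exact_mod_cast Nat.pos_of_ne_zero h
    have : 0 < Real.exp 1 * ρ * τ / n := by positivity
    exact Real.rpow_pos_of_pos this _

lemma logAB (ρ τ : ℝ) (hρ0 : 0 < ρ) (hτ0 : 0 < τ) (n : ℕ) (hn : n ≠ 0) :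
    Real.log (AB ρ τ n) = ((n:ℝ)/ρ) * ((1 + Real.log (ρ*τ)) - Real.log n) := by
  have hn' : (0:ℝ) < n := by exact_mod_cast Nat.pos_of_ne_zero hn
  unfold AB
  rw [if_neg hn, Real.log_rpow (by positivity)]
  rw [Real.log_div (by positivity) (ne_of_gt hn'), Real.log_mul (by positivity) (ne_of_gt hτ0),
    Real.log_mul (Real.exp_ne_zero 1) (ne_of_gt hρ0), Real.log_exp,
    Real.log_mul (ne_of_gt hρ0) (ne_of_gt hτ0)]
  ring

lemma keyineq (ρ τ : ℝ) (hρ0 : 0 < ρ) (hτ0 : 0 < τ) {n r : ℝ} (hn : 0 < n) (hr : 0 < r) :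
    (n/ρ) * ((1 + Real.log (ρ*τ)) - Real.log n) + n * Real.log r ≤ τ * r ^ ρ := by
  have hrρ : 0 < r ^ ρ := Real.rpow_pos_of_pos hr _
  set y := ρ * τ * r ^ ρ with hy
  have hy0 : 0 < y := by positivity
  have hxk := xlog (x := n / y) (by positivity)
  have hlog : Real.log (n / y) = Real.log n - (Real.log (ρ*τ) + ρ * Real.log r) := by
    rw [Real.log_div (ne_of_gt hn) (ne_of_gt hy0), hy,
      Real.log_mul (by positivity) (ne_of_gt hrρ), Real.log_rpow hr]
  rw [hlog] at hxk
  have hexp : (n/ρ) * ((1 + Real.log (ρ*τ)) - Real.log n) + n * Real.log r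
      = (τ * r ^ ρ) * ((n/y) * (1 - (Real.log n - (Real.log (ρ*τ) + ρ * Real.log r)))) := by
    field_simp
    ring
  rw [hexp]
  calc (τ * r ^ ρ) * ((n/y) * (1 - (Real.log n - (Real.log (ρ*τ) + ρ * Real.log r))))
      ≤ (τ * r ^ ρ) * 1 := by
        exact mul_le_mul_of_nonneg_left hxk (by positivity)
    _ = τ * r ^ ρ := mul_one _

lemma norm_ff_le {z : ℂ} {r : ℝ} (hz : ‖z‖ ≤ r) (n : ℕ) : ‖ff z n‖ ≤ (r + n)^n := by
  have h0 : 0 ≤ r := (norm_nonneg z).trans hz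
  unfold ff
  rw [norm_prod]
  calc ∏ k ∈ range n, ‖z - (k:ℂ)‖ ≤ ∏ _k ∈ range n, (r + n) := by
        apply Finset.prod_le_prod (fun k _ => norm_nonneg _)
        intro k hk
        calc ‖z - (k:ℂ)‖ ≤ ‖z‖ + ‖(k:ℂ)‖ := norm_sub_le _ _
          _ ≤ r + n := by
            rw [Complex.norm_natCast]
            have : (k:ℝ) ≤ n := by exact_mod_cast (Finset.mem_range.mp hk).le
            linarith
    _ = (r + n)^n := by rw [Finset.prod_const, Finset.card_range]

lemma term_exp (ρ τ : ℝ) (hρ0 : 0 < ρ) (hτ0 : 0 < τ) {r : ℝ} (hr : 0 < r) {n : ℕ} (hn : n ≠ 0) :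
    AB ρ τ n * (r + n)^n = Real.exp (((n:ℝ)/ρ) * ((1 + Real.log (ρ*τ)) - Real.log n)
      + n * Real.log (r + n)) := by
  have h1 : (0:ℝ) < r + n := by positivity
  rw [Real.exp_add, ← logAB ρ τ hρ0 hτ0 n hn, Real.exp_log (AB_pos ρ τ hρ0 hτ0 n)]
  congr 1
  rw [← Real.log_pow, Real.exp_log (by positivity)]

lemma tail_bound (ρ τ : ℝ) (hρ0 : 0 < ρ) (hρ1 : ρ < 1) (hτ0 : 0 < τ) :
    ∃ r₀ : ℝ, 1 ≤ r₀ ∧ ∀ r, r₀ ≤ r → ∀ n : ℕ, r ^ ((3*ρ+1)/4) ≤ (n:ℝ) →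
      AB ρ τ n * (r + n)^n ≤ Real.exp (-(n:ℝ)) := by
  set β := (3*ρ+1)/4 with hβ
  have hβ0 : 0 < β := by rw [hβ]; linarith
  have hβρ : ρ < β := by rw [hβ]; linarith
  have hβ1 : β < 1 := by rw [hβ]; linarith
  set C := 1 + Real.log (ρ*τ) with hC
  set D := C/ρ + Real.log 2 with hD
  set c := 1/β - 1/ρ with hc
  have hcneg : c < 0 := by
    rw [hc]
    have : 1/β < 1/ρ := by
      apply one_div_lt_one_div_of_lt hρ0 hβρ
    linarith
  set t₀ : ℝ := (-1 - D)/c with ht₀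
  refine ⟨max 1 (Real.exp (t₀/β)), le_max_left _ _, ?_⟩
  intro r hr n hn
  have hr1 : (1:ℝ) ≤ r := le_trans (le_max_left _ _) hr
  have hr0 : (0:ℝ) < r := by linarith
  have hrβ1 : (1:ℝ) ≤ r ^ β := Real.one_le_rpow hr1 hβ0.le
  have hn1 : 1 ≤ n := by
    by_contra h
    push_neg at h
    interval_cases n
    · simp at hn; linarith
  have hn0 : n ≠ 0 := by omega
  have hnR : (1:ℝ) ≤ (n:ℝ) := by exact_mod_cast hn1
  have hnpos : (0:ℝ) < n := by linarith
  -- log n ≥ t₀, so c * log n + D ≤ -1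
  have hlogr : t₀/β ≤ Real.log r := by
    calc t₀/β = Real.log (Real.exp (t₀/β)) := (Real.log_exp _).symm
      _ ≤ Real.log r := Real.log_le_log (Real.exp_pos _) (le_trans (le_max_right _ _) hr)
  have hlogn : t₀ ≤ Real.log n := by
    calc t₀ = β * (t₀/β) := by field_simp
      _ ≤ β * Real.log r := by nlinarith
      _ = Real.log (r ^ β) := (Real.log_rpow hr0 β).symm
      _ ≤ Real.log n := Real.log_le_log (by positivity) hn
  have hbracket : c * Real.log n + D ≤ -1 := by
    have : c * Real.log n ≤ c * t₀ := by
      exact mul_le_mul_of_nonpos_left hlogn hcneg.le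
    have h2 : c * t₀ = -1 - D := by
      rw [ht₀, mul_div_cancel₀ _ (ne_of_lt hcneg)]
    linarith
  -- r + n ≤ 2 * n^(1/β)
  have hrn : r ≤ (n:ℝ) ^ (1/β) := by
    calc r = (r ^ β) ^ (1/β) := by
          rw [← Real.rpow_mul hr0.le, mul_one_div, div_self (ne_of_gt hβ0), Real.rpow_one]
      _ ≤ (n:ℝ) ^ (1/β) := Real.rpow_le_rpow (by positivity) hn (by positivity)
  have hnn : (n:ℝ) ≤ (n:ℝ) ^ (1/β) := by
    calc (n:ℝ) = (n:ℝ) ^ (1:ℝ) := (Real.rpow_one _).symm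
      _ ≤ (n:ℝ) ^ (1/β) := Real.rpow_le_rpow_of_exponent_le hnR (by
          rw [le_div_iff₀ hβ0]; linarith)
  have hlogrn : Real.log (r + n) ≤ Real.log 2 + (1/β) * Real.log n := by
    calc Real.log (r + n) ≤ Real.log (2 * (n:ℝ) ^ (1/β)) := by
          apply Real.log_le_log (by positivity)
          linarith
      _ = Real.log 2 + (1/β) * Real.log n := by
          rw [Real.log_mul two_ne_zero (by positivity), Real.log_rpow hnpos]
  rw [term_exp ρ τ hρ0 hτ0 hr0 hn0]
  apply Real.exp_le_exp.mpr
  calc ((n:ℝ)/ρ) * (C - Real.log n) + n * Real.log (r + n)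
      ≤ ((n:ℝ)/ρ) * (C - Real.log n) + n * (Real.log 2 + (1/β) * Real.log n) := by nlinarith
    _ = (n:ℝ) * (c * Real.log n + D) := by rw [hc, hD]; field_simp; ring
    _ ≤ (n:ℝ) * (-1) := by nlinarith
    _ = -(n:ℝ) := by ring

lemma mid_bound (ρ τ : ℝ) (hρ0 : 0 < ρ) (hρ1 : ρ < 1) (hτ0 : 0 < τ)
    {r : ℝ} (hr1 : 1 ≤ r) {n : ℕ} (hn0 : n ≠ 0) (hn : (n:ℝ) ≤ r ^ ((3*ρ+1)/4)) :
    AB ρ τ n * (r + n)^n ≤ Real.exp (τ * r^ρ + r^((3*ρ-1)/2)) := by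
  set β := (3*ρ+1)/4 with hβ
  have hβ0 : 0 < β := by rw [hβ]; linarith
  have hr0 : (0:ℝ) < r := by linarith
  have hnpos : (0:ℝ) < n := by exact_mod_cast Nat.pos_of_ne_zero hn0
  rw [term_exp ρ τ hρ0 hτ0 hr0 hn0]
  apply Real.exp_le_exp.mpr
  have hlog1 : Real.log (r + n) ≤ Real.log r + (n:ℝ)/r := by
    have h1 : Real.log (r + n) = Real.log r + Real.log (1 + (n:ℝ)/r) := by
      rw [← Real.log_mul (ne_of_gt hr0) (by positivity)]
      congr 1
      field_simp
    rw [h1]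
    have h2 : Real.log (1 + (n:ℝ)/r) ≤ (n:ℝ)/r := by
      have := Real.log_le_sub_one_of_pos (x := 1 + (n:ℝ)/r) (by positivity)
      linarith
    linarith
  have hkey := keyineq ρ τ hρ0 hτ0 hnpos hr0
  have hsq : (n:ℝ)^2/r ≤ r^((3*ρ-1)/2) := by
    have h1 : (n:ℝ)^2 ≤ (r^β)^2 := by nlinarith [Real.rpow_nonneg hr0.le β]
    have h2 : (r^β)^2 = r^(2*β) := by
      rw [← Real.rpow_natCast (r^β) 2, ← Real.rpow_mul hr0.le]
      norm_num
      ring_nf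
    have h3 : r^(2*β)/r = r^((3*ρ-1)/2) := by
      nth_rewrite 2 [← Real.rpow_one r]
      rw [← Real.rpow_sub hr0]
      congr 1
      rw [hβ]; ring
    rw [← h3]
    rw [h2] at h1
    gcongr
  calc ((n:ℝ)/ρ) * ((1 + Real.log (ρ*τ)) - Real.log n) + n * Real.log (r + n)
      ≤ ((n:ℝ)/ρ) * ((1 + Real.log (ρ*τ)) - Real.log n) + n * (Real.log r + (n:ℝ)/r) := by
        nlinarith
    _ = (((n:ℝ)/ρ) * ((1 + Real.log (ρ*τ)) - Real.log n) + n * Real.log r) + (n:ℝ)^2/r := by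
        field_simp; ring
    _ ≤ τ * r^ρ + r^((3*ρ-1)/2) := by
        apply add_le_add hkey hsq

lemma summable_expneg : Summable (fun n : ℕ => Real.exp (-(n:ℝ))) := by
  have h : (fun n : ℕ => Real.exp (-(n:ℝ))) = fun n : ℕ => (Real.exp (-1))^n := by
    funext n
    rw [← Real.exp_nat_mul]
    congr 1; ring
  rw [h]
  exact summable_geometric_of_lt_one (Real.exp_pos _).le
    (Real.exp_lt_one_iff.mpr (by norm_num))

lemma tsum_expneg_le : (∑' n : ℕ, Real.exp (-(n:ℝ))) ≤ 2 := by
  have h : (fun n : ℕ => Real.exp (-(n:ℝ))) = fun n : ℕ => (Real.exp (-1))^n := by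
    funext n; rw [← Real.exp_nat_mul]; congr 1; ring
  rw [h, tsum_geometric_of_lt_one (Real.exp_pos _).le (Real.exp_lt_one_iff.mpr (by norm_num))]
  rw [inv_le_iff_one_le_mul₀ (by
    have := Real.exp_lt_one_iff.mpr (show (-1:ℝ) < 0 by norm_num)
    linarith)]
  have he : Real.exp (-1) ≤ 1/2 := by
    rw [Real.exp_neg]
    rw [inv_le_comm₀ (Real.exp_pos _) (by norm_num)]
    have := Real.add_one_le_exp (1:ℝ)
    linarith
  linarith

noncomputable def hB (ρ τ r : ℝ) (n : ℕ) : ℝ :=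
  if n ≠ 0 ∧ (n:ℝ) ≤ r ^ ((3*ρ+1)/4) then Real.exp (τ * r^ρ + r^((3*ρ-1)/2)) else 0

lemma hB_nonneg (ρ τ r : ℝ) (n : ℕ) : 0 ≤ hB ρ τ r n := by
  unfold hB; split <;> positivity

lemma hB_zero (ρ τ r : ℝ) {n : ℕ} (hn : n ∉ Finset.range (⌊r ^ ((3*ρ+1)/4)⌋₊ + 1)) :
    hB ρ τ r n = 0 := by
  unfold hB
  rw [if_neg]
  rintro ⟨h1, h2⟩
  apply hn
  rw [Finset.mem_range, Nat.lt_succ_iff]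
  exact Nat.le_floor h2

lemma hB_summable (ρ τ r : ℝ) : Summable (hB ρ τ r) :=
  summable_of_ne_finset_zero (fun _ hn => hB_zero ρ τ r hn)

lemma tsum_hB_le (ρ τ r : ℝ) (hr0 : 0 ≤ r) :
    (∑' n, hB ρ τ r n) ≤ (r ^ ((3*ρ+1)/4) + 1) * Real.exp (τ * r^ρ + r^((3*ρ-1)/2)) := by
  set m := ⌊r ^ ((3*ρ+1)/4)⌋₊ + 1 with hm
  rw [tsum_eq_sum (f := hB ρ τ r) (s := Finset.range m) (fun _ hn => hB_zero ρ τ r hn)]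
  calc ∑ n ∈ Finset.range m, hB ρ τ r n
      ≤ ∑ _n ∈ Finset.range m, Real.exp (τ * r^ρ + r^((3*ρ-1)/2)) := by
        apply Finset.sum_le_sum
        intro n _
        unfold hB
        split
        · exact le_refl _
        · positivity
    _ = (m:ℝ) * Real.exp (τ * r^ρ + r^((3*ρ-1)/2)) := by
        rw [Finset.sum_const, Finset.card_range, nsmul_eq_mul]
    _ ≤ (r ^ ((3*ρ+1)/4) + 1) * Real.exp (τ * r^ρ + r^((3*ρ-1)/2)) := by
        apply mul_le_mul_of_nonneg_right _ (Real.exp_pos _).le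
        rw [hm]
        push_cast
        have := Nat.floor_le (Real.rpow_nonneg hr0 ((3*ρ+1)/4))
        linarith

lemma ub_pointwise (ρ τ : ℝ) (hρ0 : 0 < ρ) (hρ1 : ρ < 1) (hτ0 : 0 < τ) {r : ℝ} (hr1 : 1 ≤ r)
    (htail : ∀ n : ℕ, r ^ ((3*ρ+1)/4) ≤ (n:ℝ) → AB ρ τ n * (r + n)^n ≤ Real.exp (-(n:ℝ)))
    (n : ℕ) :
    AB ρ τ n * (r + n)^n ≤ Real.exp (-(n:ℝ)) + hB ρ τ r n := by
  rcases eq_or_ne n 0 with h0 | h0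
  · subst h0
    simp [AB]
    have := hB_nonneg ρ τ r 0
    simp [Real.exp_zero] at *
    linarith [hB_nonneg ρ τ r 0]
  · rcases le_or_gt ((n:ℝ)) (r ^ ((3*ρ+1)/4)) with hle | hlt
    · have := mid_bound ρ τ hρ0 hρ1 hτ0 hr1 h0 hle
      unfold hB
      rw [if_pos ⟨h0, hle⟩]
      have := Real.exp_pos (-(n:ℝ))
      linarith
    · have := htail n hlt.le
      linarith [hB_nonneg ρ τ r n]

lemma summable_u (ρ τ : ℝ) (hρ0 : 0 < ρ) (hρ1 : ρ < 1) (hτ0 : 0 < τ) {r : ℝ} (hr1 : 1 ≤ r)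
    (htail : ∀ n : ℕ, r ^ ((3*ρ+1)/4) ≤ (n:ℝ) → AB ρ τ n * (r + n)^n ≤ Real.exp (-(n:ℝ))) :
    Summable (fun n : ℕ => AB ρ τ n * (r + n)^n) := by
  apply Summable.of_nonneg_of_le
    (fun n => mul_nonneg (AB_pos ρ τ hρ0 hτ0 n).le (by positivity))
    (ub_pointwise ρ τ hρ0 hρ1 hτ0 hr1 htail)
    (summable_expneg.add (hB_summable ρ τ r))

lemma tsum_u_le (ρ τ : ℝ) (hρ0 : 0 < ρ) (hρ1 : ρ < 1) (hτ0 : 0 < τ) {r : ℝ} (hr1 : 1 ≤ r)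
    (htail : ∀ n : ℕ, r ^ ((3*ρ+1)/4) ≤ (n:ℝ) → AB ρ τ n * (r + n)^n ≤ Real.exp (-(n:ℝ))) :
    (∑' n : ℕ, AB ρ τ n * (r + n)^n)
      ≤ 2 + (r ^ ((3*ρ+1)/4) + 1) * Real.exp (τ * r^ρ + r^((3*ρ-1)/2)) := by
  calc (∑' n : ℕ, AB ρ τ n * (r + n)^n)
      ≤ ∑' n : ℕ, (Real.exp (-(n:ℝ)) + hB ρ τ r n) :=
        Summable.tsum_le_tsum (ub_pointwise ρ τ hρ0 hρ1 hτ0 hr1 htail)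
          (summable_u ρ τ hρ0 hρ1 hτ0 hr1 htail)
          (summable_expneg.add (hB_summable ρ τ r))
    _ = (∑' n : ℕ, Real.exp (-(n:ℝ))) + ∑' n, hB ρ τ r n :=
        Summable.tsum_add summable_expneg (hB_summable ρ τ r)
    _ ≤ 2 + (r ^ ((3*ρ+1)/4) + 1) * Real.exp (τ * r^ρ + r^((3*ρ-1)/2)) :=
        add_le_add tsum_expneg_le (tsum_hB_le ρ τ r (by linarith))

noncomputable def fF (ρ τ : ℝ) : ℂ → ℂ := fun z => ∑' n : ℕ, ((AB ρ τ n : ℝ) : ℂ) * ff z n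

lemma norm_term_le (ρ τ : ℝ) (hρ0 : 0 < ρ) (hτ0 : 0 < τ) {z : ℂ} {r : ℝ} (hz : ‖z‖ ≤ r)
    (n : ℕ) : ‖((AB ρ τ n : ℝ) : ℂ) * ff z n‖ ≤ AB ρ τ n * (r + n)^n := by
  rw [norm_mul, Complex.norm_real, Real.norm_eq_abs,
    abs_of_pos (AB_pos ρ τ hρ0 hτ0 n)]
  exact mul_le_mul_of_nonneg_left (norm_ff_le hz n) (AB_pos ρ τ hρ0 hτ0 n).le

lemma unif_on_ball (ρ τ : ℝ) (hρ0 : 0 < ρ) (hρ1 : ρ < 1) (hτ0 : 0 < τ) {r : ℝ} (hr1 : 1 ≤ r)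
    (htail : ∀ n : ℕ, r ^ ((3*ρ+1)/4) ≤ (n:ℝ) → AB ρ τ n * (r + n)^n ≤ Real.exp (-(n:ℝ))) :
    TendstoUniformlyOn (fun N z => ∑ n ∈ Finset.range N, ((AB ρ τ n : ℝ) : ℂ) * ff z n)
      (fF ρ τ) atTop (Metric.closedBall (0:ℂ) r) := by
  apply tendstoUniformlyOn_tsum_nat (summable_u ρ τ hρ0 hρ1 hτ0 hr1 htail)
  intro n z hz
  exact norm_term_le ρ τ hρ0 hτ0 (by simpa [Complex.dist_eq] using hz) n

lemma unif_on_compact (ρ τ : ℝ) (hρ0 : 0 < ρ) (hρ1 : ρ < 1) (hτ0 : 0 < τ) {r₀ : ℝ} (hr₀ : 1 ≤ r₀)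
    (htail : ∀ r, r₀ ≤ r → ∀ n : ℕ, r ^ ((3*ρ+1)/4) ≤ (n:ℝ) →
      AB ρ τ n * (r + n)^n ≤ Real.exp (-(n:ℝ)))
    (K : Set ℂ) (hK : IsCompact K) :
    TendstoUniformlyOn (fun N z => ∑ n ∈ Finset.range N, ((AB ρ τ n : ℝ) : ℂ) * ff z n)
      (fF ρ τ) atTop K := by
  obtain ⟨R, hR⟩ := hK.isBounded.subset_closedBall 0
  set R' := max R r₀ with hR'
  have h1 : r₀ ≤ R' := le_max_right _ _
  apply (unif_on_ball ρ τ hρ0 hρ1 hτ0 (le_trans hr₀ h1) (htail R' h1)).mono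
  exact hR.trans (Metric.closedBall_subset_closedBall (le_max_left _ _))

lemma partial_diff (ρ τ : ℝ) (N : ℕ) :
    Differentiable ℂ (fun z => ∑ n ∈ Finset.range N, ((AB ρ τ n : ℝ) : ℂ) * ff z n) := by
  apply Differentiable.fun_sum
  intro n _
  apply Differentiable.const_mul
  unfold ff
  apply Differentiable.fun_finset_prod
  intro k _
  exact differentiable_id.sub (differentiable_const _)

lemma fF_diff (ρ τ : ℝ) (hρ0 : 0 < ρ) (hρ1 : ρ < 1) (hτ0 : 0 < τ) {r₀ : ℝ} (hr₀ : 1 ≤ r₀)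
    (htail : ∀ r, r₀ ≤ r → ∀ n : ℕ, r ^ ((3*ρ+1)/4) ≤ (n:ℝ) →
      AB ρ τ n * (r + n)^n ≤ Real.exp (-(n:ℝ))) :
    Differentiable ℂ (fF ρ τ) := by
  rw [← differentiableOn_univ]
  apply TendstoLocallyUniformlyOn.differentiableOn
    (F := fun N z => ∑ n ∈ Finset.range N, ((AB ρ τ n : ℝ) : ℂ) * ff z n) (φ := atTop)
  · rw [tendstoLocallyUniformlyOn_iff_forall_isCompact isOpen_univ]
    intro K _ hK
    exact unif_on_compact ρ τ hρ0 hρ1 hτ0 hr₀ htail K hK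
  · exact Eventually.of_forall fun N => (partial_diff ρ τ N).differentiableOn
  · exact isOpen_univ

lemma fF_norm_le (ρ τ : ℝ) (hρ0 : 0 < ρ) (hρ1 : ρ < 1) (hτ0 : 0 < τ) {r : ℝ} (hr1 : 1 ≤ r)
    (htail : ∀ n : ℕ, r ^ ((3*ρ+1)/4) ≤ (n:ℝ) → AB ρ τ n * (r + n)^n ≤ Real.exp (-(n:ℝ)))
    {z : ℂ} (hz : ‖z‖ ≤ r) :
    ‖fF ρ τ z‖ ≤ 2 + (r ^ ((3*ρ+1)/4) + 1) * Real.exp (τ * r^ρ + r^((3*ρ-1)/2)) := by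
  have hsum : Summable (fun n : ℕ => ‖((AB ρ τ n : ℝ) : ℂ) * ff z n‖) := by
    apply Summable.of_nonneg_of_le (fun n => norm_nonneg _)
      (norm_term_le ρ τ hρ0 hτ0 hz) (summable_u ρ τ hρ0 hρ1 hτ0 hr1 htail)
  calc ‖fF ρ τ z‖ ≤ ∑' n : ℕ, ‖((AB ρ τ n : ℝ) : ℂ) * ff z n‖ := norm_tsum_le_tsum_norm hsum
    _ ≤ ∑' n : ℕ, AB ρ τ n * (r + n)^n :=
        Summable.tsum_le_tsum (norm_term_le ρ τ hρ0 hτ0 hz) hsum (summable_u ρ τ hρ0 hρ1 hτ0 hr1 htail)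
    _ ≤ 2 + (r ^ ((3*ρ+1)/4) + 1) * Real.exp (τ * r^ρ + r^((3*ρ-1)/2)) :=
        tsum_u_le ρ τ hρ0 hρ1 hτ0 hr1 htail

lemma log_one_sub_ge {x : ℝ} (h0 : 0 ≤ x) (h2 : x ≤ 1/2) : -(2*x) ≤ Real.log (1-x) := by
  have h1x : (0:ℝ) < 1 - x := by linarith
  rw [← Real.log_exp (-(2*x))]
  apply Real.log_le_log (Real.exp_pos _)
  rw [Real.exp_neg]
  have he : (1:ℝ) + 2*x ≤ Real.exp (2*x) := by
    have := Real.add_one_le_exp (2*x); linarith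
  have hx1 : (0:ℝ) < 1 + 2*x := by linarith
  calc (Real.exp (2*x))⁻¹ ≤ (1+2*x)⁻¹ := by
        apply inv_anti₀ hx1 he
    _ ≤ 1 - x := by
        rw [inv_le_iff_one_le_mul₀ hx1]
        nlinarith

lemma vN_low (ρ τ : ℝ) (hρ0 : 0 < ρ) (hρ1 : ρ < 1) (hτ0 : 0 < τ) {r : ℝ} (hr1 : 1 ≤ r)
    (h1 : 1 ≤ ρ*τ*r^ρ) (h2 : ρ*τ*r^ρ ≤ r/2) :
    Real.exp (τ*r^ρ - 2*(ρ*τ)^2 * r^(2*ρ-1) - 1/ρ)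
      ≤ AB ρ τ (⌊ρ*τ*r^ρ⌋₊) * ∏ k ∈ Finset.range (⌊ρ*τ*r^ρ⌋₊), (r - k) := by
  set N := ⌊ρ*τ*r^ρ⌋₊ with hNdef
  have hr0 : (0:ℝ) < r := by linarith
  have hrρ : (0:ℝ) < r ^ ρ := Real.rpow_pos_of_pos hr0 _
  have hN1 : 1 ≤ N := by
    rw [hNdef]
    exact Nat.le_floor (by exact_mod_cast h1)
  have hN0 : N ≠ 0 := by omega
  have hNR : (1:ℝ) ≤ (N:ℝ) := by exact_mod_cast hN1
  have hNle : (N:ℝ) ≤ ρ*τ*r^ρ := Nat.floor_le (by positivity)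
  have hNge : ρ*τ*r^ρ - 1 ≤ (N:ℝ) := by
    have := Nat.lt_floor_add_one (ρ*τ*r^ρ)
    push_cast at this ⊢
    linarith
  have hNr2 : (N:ℝ) ≤ r/2 := le_trans hNle h2
  have hrN : (0:ℝ) < r - N := by linarith
  -- product lower bound
  have hprod : (r - N)^N ≤ ∏ k ∈ Finset.range N, (r - k) := by
    calc (r - N)^N = ∏ _k ∈ Finset.range N, (r - (N:ℝ)) := by
          rw [Finset.prod_const, Finset.card_range]
      _ ≤ ∏ k ∈ Finset.range N, (r - k) := by
          apply Finset.prod_le_prod (fun k _ => hrN.le)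
          intro k hk
          have : (k:ℝ) ≤ N := by exact_mod_cast (Finset.mem_range.mp hk).le
          linarith
  -- exponential form
  have hABpos := AB_pos ρ τ hρ0 hτ0 N
  have hterm : AB ρ τ N * (r - N)^N
      = Real.exp (((N:ℝ)/ρ) * ((1 + Real.log (ρ*τ)) - Real.log N) + N * Real.log (r - N)) := by
    rw [Real.exp_add, ← logAB ρ τ hρ0 hτ0 N hN0, Real.exp_log hABpos]
    congr 1
    rw [← Real.log_pow, Real.exp_log (by positivity)]
  -- estimate the exponent from below
  have hlogN : Real.log N ≤ Real.log (ρ*τ) + ρ * Real.log r := by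
    calc Real.log N ≤ Real.log (ρ*τ*r^ρ) := Real.log_le_log (by positivity) hNle
      _ = Real.log (ρ*τ) + ρ * Real.log r := by
          rw [Real.log_mul (by positivity) (ne_of_gt hrρ), Real.log_rpow hr0]
  have hA : ((N:ℝ)/ρ) * (1 - ρ * Real.log r) ≤ ((N:ℝ)/ρ) * ((1 + Real.log (ρ*τ)) - Real.log N) := by
    apply mul_le_mul_of_nonneg_left _ (by positivity)
    linarith
  have hlogrN : Real.log r - 2*((N:ℝ)/r) ≤ Real.log (r - N) := by
    have hx0 : 0 ≤ (N:ℝ)/r := by positivity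
    have hx2 : (N:ℝ)/r ≤ 1/2 := by
      rw [div_le_div_iff₀ hr0 (by norm_num)]
      linarith
    have heq : r - N = r * (1 - (N:ℝ)/r) := by field_simp
    rw [heq, Real.log_mul (ne_of_gt hr0) (by
      have : (0:ℝ) < 1 - (N:ℝ)/r := by linarith
      linarith)]
    have := log_one_sub_ge hx0 hx2
    linarith
  have hB : (N:ℝ) * (Real.log r - 2*((N:ℝ)/r)) ≤ (N:ℝ) * Real.log (r - N) :=
    mul_le_mul_of_nonneg_left hlogrN (by positivity)
  -- N²/r bound
  have hsq : (N:ℝ)^2/r ≤ (ρ*τ)^2 * r^(2*ρ-1) := by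
    have h1' : (N:ℝ)^2 ≤ (ρ*τ)^2 * (r^ρ)^2 := by nlinarith
    have h2' : (r^ρ)^2 = r^(2*ρ) := by
      rw [← Real.rpow_natCast (r^ρ) 2, ← Real.rpow_mul hr0.le]
      norm_num; ring_nf
    have h3' : r^(2*ρ)/r = r^(2*ρ-1) := by
      nth_rewrite 2 [← Real.rpow_one r]
      rw [← Real.rpow_sub hr0]
    calc (N:ℝ)^2/r ≤ ((ρ*τ)^2 * r^(2*ρ))/r := by
          rw [← h2']; gcongr
      _ = (ρ*τ)^2 * (r^(2*ρ)/r) := by ring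
      _ = (ρ*τ)^2 * r^(2*ρ-1) := by rw [h3']
  -- assemble
  calc Real.exp (τ*r^ρ - 2*(ρ*τ)^2 * r^(2*ρ-1) - 1/ρ)
      ≤ Real.exp (((N:ℝ)/ρ) * ((1 + Real.log (ρ*τ)) - Real.log N) + N * Real.log (r - N)) := by
        apply Real.exp_le_exp.mpr
        have expand : ((N:ℝ)/ρ) * (1 - ρ * Real.log r) + (N:ℝ) * (Real.log r - 2*((N:ℝ)/r))
            = (N:ℝ)/ρ - 2*((N:ℝ)^2/r) := by
          field_simp
          ring
        have hfin : τ*r^ρ - 2*(ρ*τ)^2 * r^(2*ρ-1) - 1/ρ ≤ (N:ℝ)/ρ - 2*((N:ℝ)^2/r) := by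
          have hNρ : (ρ*τ*r^ρ - 1)/ρ ≤ (N:ℝ)/ρ := by
            gcongr
          have heq2 : (ρ*τ*r^ρ - 1)/ρ = τ*r^ρ - 1/ρ := by
            field_simp
          nlinarith [hsq]
        linarith [hA, hB, expand ▸ (add_le_add hA hB)]
      _ = AB ρ τ N * (r - N)^N := hterm.symm
      _ ≤ AB ρ τ N * ∏ k ∈ Finset.range N, (r - k) :=
            mul_le_mul_of_nonneg_left hprod hABpos.le

lemma fF_low (ρ τ : ℝ) (hρ0 : 0 < ρ) (hρ1 : ρ < 1) (hτ0 : 0 < τ) {r : ℝ} (hr1 : 1 ≤ r)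
    (htail : ∀ n : ℕ, r ^ ((3*ρ+1)/4) ≤ (n:ℝ) → AB ρ τ n * (r + n)^n ≤ Real.exp (-(n:ℝ)))
    (h1 : 1 ≤ ρ*τ*r^ρ) (h2 : ρ*τ*r^ρ ≤ r/2) :
    Real.exp (τ*r^ρ - 2*(ρ*τ)^2 * r^(2*ρ-1) - 1/ρ) - 2 ≤ ‖fF ρ τ ((r:ℝ):ℂ)‖ := by
  have hr0 : (0:ℝ) < r := by linarith
  set v : ℕ → ℝ := fun n => AB ρ τ n * ∏ k ∈ Finset.range n, (r - k) with hv
  -- identification of fF at real r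
  have hffr : ∀ n : ℕ, ff ((r:ℝ):ℂ) n = (((∏ k ∈ Finset.range n, (r - k) : ℝ)) : ℂ) := by
    intro n
    unfold ff
    push_cast
    rfl
  have hident : fF ρ τ ((r:ℝ):ℂ) = ((∑' n, v n : ℝ) : ℂ) := by
    unfold fF
    rw [Complex.ofReal_tsum]
    congr 1
    funext n
    rw [hffr n, hv]
    push_cast
    ring
  -- |v n| ≤ u r n
  have hvnorm : ∀ n : ℕ, |v n| ≤ AB ρ τ n * (r + n)^n := by
    intro n
    rw [hv, abs_mul, abs_of_pos (AB_pos ρ τ hρ0 hτ0 n)]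
    apply mul_le_mul_of_nonneg_left _ (AB_pos ρ τ hρ0 hτ0 n).le
    rw [Finset.abs_prod]
    calc ∏ k ∈ Finset.range n, |r - (k:ℝ)| ≤ ∏ _k ∈ Finset.range n, (r + n) := by
          apply Finset.prod_le_prod (fun k _ => abs_nonneg _)
          intro k hk
          have hk' : (k:ℝ) ≤ n := by exact_mod_cast (Finset.mem_range.mp hk).le
          have hk0 : (0:ℝ) ≤ k := Nat.cast_nonneg k
          rw [abs_sub_le_iff]
          constructor <;> linarith
      _ = (r + n)^n := by rw [Finset.prod_const, Finset.card_range]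
  have hvsum : Summable v := by
    apply Summable.of_norm_bounded (summable_u ρ τ hρ0 hρ1 hτ0 hr1 htail)
    intro n
    rw [Real.norm_eq_abs]
    exact hvnorm n
  -- tail control: for (n:ℝ) > r, |v n| ≤ exp (-n)
  have hrβ : r ^ ((3*ρ+1)/4) ≤ r := by
    calc r ^ ((3*ρ+1)/4) ≤ r ^ (1:ℝ) :=
          Real.rpow_le_rpow_of_exponent_le hr1 (by linarith)
      _ = r := Real.rpow_one r
  set q : ℕ → ℝ := fun n => if r < (n:ℝ) then Real.exp (-(n:ℝ)) else 0 with hq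
  have hqnonneg : ∀ n, 0 ≤ q n := by
    intro n; rw [hq]; dsimp only; split <;> positivity
  have hqle : ∀ n, q n ≤ Real.exp (-(n:ℝ)) := by
    intro n; rw [hq]; dsimp only; split
    · exact le_refl _
    · positivity
  have hqsum : Summable q := Summable.of_nonneg_of_le hqnonneg hqle summable_expneg
  have htsumq : (∑' n, q n) ≤ 2 :=
    le_trans (Summable.tsum_le_tsum hqle hqsum summable_expneg) tsum_expneg_le
  -- p = v + q is nonnegative
  have hpnonneg : ∀ n, 0 ≤ v n + q n := by
    intro n
    rcases le_or_gt ((n:ℝ)) r with hle | hlt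
    · have hv0 : 0 ≤ v n := by
        rw [hv]
        apply mul_nonneg (AB_pos ρ τ hρ0 hτ0 n).le
        apply Finset.prod_nonneg
        intro k hk
        have : (k:ℝ) < n := by exact_mod_cast Finset.mem_range.mp hk
        linarith
      linarith [hqnonneg n]
    · have hq' : q n = Real.exp (-(n:ℝ)) := by rw [hq]; exact if_pos hlt
      have := htail n (le_trans hrβ hlt.le)
      have := (abs_le.mp ((hvnorm n).trans this)).1
      rw [hq']
      linarith
  have hpsum : Summable (fun n => v n + q n) := hvsum.add hqsum
  -- main term
  set N := ⌊ρ*τ*r^ρ⌋₊ with hNdef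
  have hvN := vN_low ρ τ hρ0 hρ1 hτ0 hr1 h1 h2
  have hple : v N + q N ≤ ∑' n, (v n + q n) := Summable.le_tsum hpsum N (fun m _ => hpnonneg m)
  have htsum_split : (∑' n, (v n + q n)) = (∑' n, v n) + ∑' n, q n := Summable.tsum_add hvsum hqsum
  have hlow : Real.exp (τ*r^ρ - 2*(ρ*τ)^2 * r^(2*ρ-1) - 1/ρ) - 2 ≤ ∑' n, v n := by
    have : Real.exp (τ*r^ρ - 2*(ρ*τ)^2 * r^(2*ρ-1) - 1/ρ) ≤ v N + q N := by
      have : Real.exp (τ*r^ρ - 2*(ρ*τ)^2 * r^(2*ρ-1) - 1/ρ) ≤ v N := hvN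
      linarith [hqnonneg N]
    linarith [htsum_split ▸ hple, htsumq]
  rw [hident, Complex.norm_real, Real.norm_eq_abs]
  exact le_trans hlow (le_abs_self _)

lemma maxMod_le {f : ℂ → ℂ} {r B : ℝ} (hr : 0 ≤ r)
    (hB : ∀ z ∈ Metric.closedBall (0:ℂ) r, ‖f z‖ ≤ B) : maxMod f r ≤ B := by
  apply csSup_le
  · exact ⟨‖f 0‖, ⟨0, by simpa using hr, rfl⟩⟩
  · rintro x ⟨z, hz, rfl⟩
    exact hB z hz

lemma le_maxMod {f : ℂ → ℂ} (hf : Continuous f) {r : ℝ} {z : ℂ}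
    (hz : z ∈ Metric.closedBall (0:ℂ) r) : ‖f z‖ ≤ maxMod f r := by
  apply le_csSup
  · exact ((isCompact_closedBall (0:ℂ) r).image (hf.norm)).bddAbove
  · exact ⟨z, hz, rfl⟩

lemma mem_cb {z : ℂ} {r : ℝ} : z ∈ Metric.closedBall (0:ℂ) r ↔ ‖z‖ ≤ r := by
  simp [Complex.dist_eq]

lemma rpow_mul_rpow {r a b : ℝ} (hr : 0 < r) : r ^ a * r ^ b = r ^ (a + b) :=
  (Real.rpow_add hr a b).symm

lemma log_le_rpow_aux {r ρ : ℝ} (hr : 1 ≤ r) (hρ0 : 0 < ρ) :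
    Real.log r ≤ (2/ρ) * r ^ (ρ/2) := by
  have hr0 : (0:ℝ) < r := by linarith
  have h1 : Real.log r = (2/ρ) * Real.log (r ^ (ρ/2)) := by
    rw [Real.log_rpow hr0]
    field_simp
  rw [h1]
  apply mul_le_mul_of_nonneg_left _ (by positivity)
  have := Real.log_le_sub_one_of_pos (Real.rpow_pos_of_pos hr0 (ρ/2))
  linarith

lemma tendsto_aux_lo (ρ τ c d : ℝ) (hρ0 : 0 < ρ) (hρ1 : ρ < 1) :
    Tendsto (fun r : ℝ => τ - c * r^(ρ-1) - d * r^(-ρ)) atTop (𝓝 τ) := by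
  have h1 : Tendsto (fun r : ℝ => r^(ρ-1)) atTop (𝓝 0) := by
    have : (fun r : ℝ => r^(ρ-1)) = fun r : ℝ => r^(-(1-ρ)) := by
      funext r; congr 1; ring
    rw [this]
    exact tendsto_rpow_neg_atTop (by linarith)
  have h2 : Tendsto (fun r : ℝ => r^(-ρ)) atTop (𝓝 0) := tendsto_rpow_neg_atTop hρ0
  have := (tendsto_const_nhds (x := τ) (f := atTop)).sub
    ((h1.const_mul c).sub (tendsto_const_nhds (x := (0:ℝ))) |>.add (h2.const_mul d))
  simpa using ((tendsto_const_nhds (x := τ) (f := atTop)).sub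
    ((h1.const_mul c).add (h2.const_mul d))).congr (by intro r; ring)

lemma tendsto_aux_up (ρ τ c d : ℝ) (hρ0 : 0 < ρ) (hρ1 : ρ < 1) :
    Tendsto (fun r : ℝ => τ + r^((ρ-1)/2) + c * r^(-ρ) + d * r^(-(ρ/2))) atTop (𝓝 τ) := by
  have h1 : Tendsto (fun r : ℝ => r^((ρ-1)/2)) atTop (𝓝 0) := by
    have : (fun r : ℝ => r^((ρ-1)/2)) = fun r : ℝ => r^(-((1-ρ)/2)) := by
      funext r; congr 1; ring
    rw [this]
    exact tendsto_rpow_neg_atTop (by linarith)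
  have h2 : Tendsto (fun r : ℝ => r^(-ρ)) atTop (𝓝 0) := tendsto_rpow_neg_atTop hρ0
  have h3 : Tendsto (fun r : ℝ => r^(-(ρ/2))) atTop (𝓝 0) := tendsto_rpow_neg_atTop (by linarith)
  simpa using ((tendsto_const_nhds (x := τ) (f := atTop)).add
    ((h1.add (h2.const_mul c)).add (h3.const_mul d))).congr (by intro r; ring)

lemma central (ρ τ : ℝ) (hρ0 : 0 < ρ) (hρ1 : ρ < 1) (hτ0 : 0 < τ) (M : ℝ → ℝ)
    (hup : ∀ᶠ r in atTop, M r ≤ 2 + (r ^ ((3*ρ+1)/4) + 1) * Real.exp (τ*r^ρ + r^((3*ρ-1)/2)))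
    (hlo : ∀ᶠ r in atTop, Real.exp (τ*r^ρ - 2*(ρ*τ)^2*r^(2*ρ-1) - 1/ρ) - 2 ≤ M r) :
    Tendsto (fun r => Real.log (M r) / r^ρ) atTop (𝓝 τ) := by
  set c₁ : ℝ := 2*(ρ*τ)^2 with hc₁
  set g : ℝ → ℝ := fun r => τ*r^ρ - c₁*r^(2*ρ-1) - 1/ρ with hg
  set c₃ : ℝ := ((3*ρ+1)/4) * (2/ρ) with hc₃
  -- identity for g r / r^ρ type expressions
  have hgdiv : ∀ d : ℝ, ∀ r : ℝ, 1 ≤ r →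
      (τ*r^ρ - c₁*r^(2*ρ-1) - d) / r^ρ = τ - c₁*r^(ρ-1) - d*r^(-ρ) := by
    intro d r hr
    have hr0 : (0:ℝ) < r := by linarith
    have hrρ : (0:ℝ) < r^ρ := Real.rpow_pos_of_pos hr0 _
    rw [eq_comm, eq_div_iff (ne_of_gt hrρ)]
    have e1 : r^(ρ-1) * r^ρ = r^(2*ρ-1) := by rw [rpow_mul_rpow hr0]; ring_nf
    have e2 : r^(-ρ) * r^ρ = 1 := by rw [rpow_mul_rpow hr0]; simp
    calc (τ - c₁*r^(ρ-1) - d*r^(-ρ)) * r^ρ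
        = τ*r^ρ - c₁*(r^(ρ-1)*r^ρ) - d*(r^(-ρ)*r^ρ) := by ring
      _ = τ*r^ρ - c₁*r^(2*ρ-1) - d := by rw [e1, e2]; ring
  -- g tends to infinity
  have hgdivT : Tendsto (fun r => g r / r^ρ) atTop (𝓝 τ) := by
    apply (tendsto_aux_lo ρ τ c₁ (1/ρ) hρ0 hρ1).congr'
    filter_upwards [eventually_ge_atTop (1:ℝ)] with r hr
    exact (hgdiv (1/ρ) r hr).symm
  have hgT : Tendsto g atTop atTop := by
    apply Tendsto.congr' _ (hgdivT.pos_mul_atTop hτ0 (tendsto_rpow_atTop hρ0))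
    filter_upwards [eventually_ge_atTop (1:ℝ)] with r hr
    have hrρ : (0:ℝ) < r^ρ := Real.rpow_pos_of_pos (by linarith) _
    field_simp
  -- eventual positivity and lower log bound
  have hev4 : ∀ᶠ r in atTop, Real.log 4 ≤ g r := hgT.eventually_ge_atTop _
  have hlolog : ∀ᶠ r in atTop, (g r - Real.log 2) / r^ρ ≤ Real.log (M r) / r^ρ ∧
      0 < M r := by
    filter_upwards [hlo, hev4, eventually_ge_atTop (1:ℝ)] with r hlo' h4 hr1
    have hr0 : (0:ℝ) < r := by linarith
    have hrρ : (0:ℝ) < r^ρ := Real.rpow_pos_of_pos hr0 _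
    have hexp4 : (4:ℝ) ≤ Real.exp (g r) := by
      calc (4:ℝ) = Real.exp (Real.log 4) := by rw [Real.exp_log]; norm_num
        _ ≤ Real.exp (g r) := Real.exp_le_exp.mpr h4
    have hM2 : Real.exp (g r) / 2 ≤ M r := by
      have : Real.exp (g r) - 2 ≤ M r := hlo'
      linarith
    have hMpos : 0 < M r := lt_of_lt_of_le (by positivity) hM2
    refine ⟨?_, hMpos⟩
    gcongr
    calc g r - Real.log 2 = Real.log (Real.exp (g r) / 2) := by
          rw [Real.log_div (Real.exp_ne_zero _) two_ne_zero, Real.log_exp]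
      _ ≤ Real.log (M r) := Real.log_le_log (by positivity) hM2
  -- eventual upper log bound
  have huplog : ∀ᶠ r in atTop,
      Real.log (M r) / r^ρ ≤ (τ*r^ρ + r^((3*ρ-1)/2) + Real.log 4 + c₃ * r^(ρ/2)) / r^ρ := by
    filter_upwards [hup, hlolog, eventually_ge_atTop (1:ℝ)] with r hup' hlo' hr1
    have hr0 : (0:ℝ) < r := by linarith
    have hrρ : (0:ℝ) < r^ρ := Real.rpow_pos_of_pos hr0 _
    have hrβ1 : (1:ℝ) ≤ r ^ ((3*ρ+1)/4) := Real.one_le_rpow hr1 (by linarith)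
    have hE1 : (1:ℝ) ≤ Real.exp (τ*r^ρ + r^((3*ρ-1)/2)) :=
      Real.one_le_exp (by positivity)
    gcongr
    calc Real.log (M r)
        ≤ Real.log ((r ^ ((3*ρ+1)/4) + 3) * Real.exp (τ*r^ρ + r^((3*ρ-1)/2))) := by
          apply Real.log_le_log hlo'.2
          nlinarith
      _ = Real.log (r ^ ((3*ρ+1)/4) + 3) + (τ*r^ρ + r^((3*ρ-1)/2)) := by
          rw [Real.log_mul (by positivity) (Real.exp_ne_zero _), Real.log_exp]
      _ ≤ (Real.log 4 + ((3*ρ+1)/4) * Real.log r) + (τ*r^ρ + r^((3*ρ-1)/2)) := by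
          have : Real.log (r ^ ((3*ρ+1)/4) + 3) ≤ Real.log (4 * r ^ ((3*ρ+1)/4)) := by
            apply Real.log_le_log (by positivity)
            linarith
          rw [Real.log_mul (by norm_num) (by positivity), Real.log_rpow hr0] at this
          linarith
      _ ≤ τ*r^ρ + r^((3*ρ-1)/2) + Real.log 4 + c₃ * r^(ρ/2) := by
          have := log_le_rpow_aux hr1 hρ0
          have hc₃' : c₃ * r^(ρ/2) = ((3*ρ+1)/4) * ((2/ρ) * r^(ρ/2)) := by rw [hc₃]; ring
          rw [hc₃']
          have h34 : (0:ℝ) ≤ (3*ρ+1)/4 := by linarith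
          nlinarith [mul_le_mul_of_nonneg_left this h34]
  -- upper identity and tendsto
  have hupid : ∀ᶠ r in atTop,
      (τ*r^ρ + r^((3*ρ-1)/2) + Real.log 4 + c₃ * r^(ρ/2)) / r^ρ
        = τ + r^((ρ-1)/2) + (Real.log 4) * r^(-ρ) + c₃ * r^(-(ρ/2)) := by
    filter_upwards [eventually_ge_atTop (1:ℝ)] with r hr1
    have hr0 : (0:ℝ) < r := by linarith
    have hrρ : (0:ℝ) < r^ρ := Real.rpow_pos_of_pos hr0 _
    rw [eq_comm, eq_div_iff (ne_of_gt hrρ)]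
    have e1 : r^((ρ-1)/2) * r^ρ = r^((3*ρ-1)/2) := by rw [rpow_mul_rpow hr0]; ring_nf
    have e2 : r^(-ρ) * r^ρ = 1 := by rw [rpow_mul_rpow hr0]; simp
    have e3 : r^(-(ρ/2)) * r^ρ = r^(ρ/2) := by rw [rpow_mul_rpow hr0]; ring_nf
    calc (τ + r^((ρ-1)/2) + (Real.log 4) * r^(-ρ) + c₃ * r^(-(ρ/2))) * r^ρ
        = τ*r^ρ + r^((ρ-1)/2)*r^ρ + (Real.log 4)*(r^(-ρ)*r^ρ) + c₃*(r^(-(ρ/2))*r^ρ) := by ring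
      _ = τ*r^ρ + r^((3*ρ-1)/2) + Real.log 4 + c₃ * r^(ρ/2) := by rw [e1, e2, e3]; ring
  -- lower identity
  have hloid : ∀ᶠ r in atTop,
      (g r - Real.log 2) / r^ρ = τ - c₁*r^(ρ-1) - (1/ρ + Real.log 2)*r^(-ρ) := by
    filter_upwards [eventually_ge_atTop (1:ℝ)] with r hr1
    have : g r - Real.log 2 = τ*r^ρ - c₁*r^(2*ρ-1) - (1/ρ + Real.log 2) := by rw [hg]; ring
    rw [this, hgdiv (1/ρ + Real.log 2) r hr1]
  -- squeeze
  apply tendsto_of_tendsto_of_tendsto_of_le_of_le'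
    (g := fun r => (g r - Real.log 2) / r^ρ)
    (h := fun r => (τ*r^ρ + r^((3*ρ-1)/2) + Real.log 4 + c₃ * r^(ρ/2)) / r^ρ)
  · exact (tendsto_aux_lo ρ τ c₁ (1/ρ + Real.log 2) hρ0 hρ1).congr'
      (by filter_upwards [hloid] with r h using h.symm)
  · exact (tendsto_aux_up ρ τ (Real.log 4) c₃ hρ0 hρ1).congr'
      (by filter_upwards [hupid] with r h using h.symm)
  · filter_upwards [hlolog] with r h using h.1
  · exact huplog

lemma order_from_central (ρ τ : ℝ) (hρ0 : 0 < ρ) (hρ1 : ρ < 1) (hτ0 : 0 < τ) (M : ℝ → ℝ)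
    (hc : Tendsto (fun r => Real.log (M r) / r^ρ) atTop (𝓝 τ)) :
    Tendsto (fun r => Real.log (Real.log (M r)) / Real.log r) atTop (𝓝 ρ) := by
  have hio : ∀ᶠ r in atTop, Real.log (M r) / r^ρ ∈ Set.Ioo (τ/2) (2*τ) :=
    hc.eventually (Ioo_mem_nhds (by linarith) (by linarith))
  have hrg : Tendsto (fun r : ℝ => (τ/2) * r^ρ) atTop atTop :=
    (tendsto_rpow_atTop hρ0).const_mul_atTop (by linarith)
  have h1ev : ∀ᶠ r in atTop, (1:ℝ) ≤ (τ/2) * r^ρ := hrg.eventually_ge_atTop _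
  have hsand : ∀ᶠ r in atTop,
      (Real.log (τ/2) + ρ * Real.log r) / Real.log r
        ≤ Real.log (Real.log (M r)) / Real.log r ∧
      Real.log (Real.log (M r)) / Real.log r
        ≤ (Real.log (2*τ) + ρ * Real.log r) / Real.log r := by
    filter_upwards [hio, h1ev, eventually_ge_atTop (Real.exp 1)] with r hio' h1' hre
    have hr1 : (1:ℝ) < r := lt_of_lt_of_le (by
      have := Real.add_one_le_exp (1:ℝ); linarith) hre
    have hr0 : (0:ℝ) < r := by linarith
    have hrρ : (0:ℝ) < r^ρ := Real.rpow_pos_of_pos hr0 _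
    have hlogr : (1:ℝ) ≤ Real.log r := by
      calc (1:ℝ) = Real.log (Real.exp 1) := (Real.log_exp 1).symm
        _ ≤ Real.log r := Real.log_le_log (Real.exp_pos 1) hre
    have hlogr0 : (0:ℝ) < Real.log r := by linarith
    obtain ⟨hlo', hup'⟩ := hio'
    have hMlo : (τ/2) * r^ρ ≤ Real.log (M r) := by
      rw [lt_div_iff₀ hrρ] at hlo'
      linarith
    have hMup : Real.log (M r) ≤ (2*τ) * r^ρ := by
      rw [div_lt_iff₀ hrρ] at hup'
      linarith
    have hMpos : (1:ℝ) ≤ Real.log (M r) := le_trans h1' hMlo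
    constructor
    · gcongr
      calc Real.log (τ/2) + ρ * Real.log r = Real.log ((τ/2) * r^ρ) := by
            rw [Real.log_mul (by positivity) (ne_of_gt hrρ), Real.log_rpow hr0]
        _ ≤ Real.log (Real.log (M r)) := Real.log_le_log (by positivity) hMlo
    · gcongr
      calc Real.log (Real.log (M r)) ≤ Real.log ((2*τ) * r^ρ) :=
            Real.log_le_log (by linarith) hMup
        _ = Real.log (2*τ) + ρ * Real.log r := by
            rw [Real.log_mul (by positivity) (ne_of_gt hrρ), Real.log_rpow hr0]
  have haux : ∀ c : ℝ, Tendsto (fun r : ℝ => (Real.log c + ρ * Real.log r) / Real.log r)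
      atTop (𝓝 ρ) := by
    intro c
    have h0 : Tendsto (fun r : ℝ => Real.log c / Real.log r + ρ) atTop (𝓝 (0 + ρ)) :=
      (Tendsto.const_div_atTop Real.tendsto_log_atTop _).add tendsto_const_nhds
    rw [zero_add] at h0
    apply h0.congr'
    filter_upwards [eventually_ge_atTop (Real.exp 1)] with r hre
    have hr0 : (0:ℝ) < r := lt_of_lt_of_le (Real.exp_pos 1) hre
    have hlogr : (1:ℝ) ≤ Real.log r := by
      calc (1:ℝ) = Real.log (Real.exp 1) := (Real.log_exp 1).symm
        _ ≤ Real.log r := Real.log_le_log (Real.exp_pos 1) hre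
    have h : Real.log r ≠ 0 := by linarith
    field_simp
  apply tendsto_of_tendsto_of_tendsto_of_le_of_le' (haux (τ/2)) (haux (2*τ))
  · filter_upwards [hsand] with r h using h.1
  · filter_upwards [hsand] with r h using h.2

theorem example_mean_type (ρ τ : ℝ) (hρ0 : 0 < ρ) (hρ1 : ρ < 1) (hτ0 : 0 < τ)
    (a : ℕ → ℂ)
    (ha : ∀ n : ℕ, a n = if n = 0 then 1 else
      (((Real.exp 1 * ρ * τ / (n : ℝ)) ^ ((n : ℝ) / ρ) : ℝ) : ℂ)) :
    ∃ f : ℂ → ℂ, Differentiable ℂ f ∧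
      (∀ K : Set ℂ, IsCompact K →
        TendstoUniformlyOn (fun N z => ∑ n ∈ Finset.range N, a n * ff z n) f
          Filter.atTop K) ∧
      growthOrder f = ρ ∧ growthTypeE f ρ = ((τ : ℝ) : EReal) := by
  obtain ⟨r₀, hr₀1, htail⟩ := tail_bound ρ τ hρ0 hρ1 hτ0
  have hae : ∀ n : ℕ, a n = ((AB ρ τ n : ℝ) : ℂ) := by
    intro n
    rw [ha n]
    unfold AB
    split <;> simp
  have hdiff := fF_diff ρ τ hρ0 hρ1 hτ0 hr₀1 htail
  have hcont : Continuous (fF ρ τ) := hdiff.continuous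
  -- upper eventual bound for maxMod
  have hMup : ∀ᶠ r in atTop, maxMod (fF ρ τ) r
      ≤ 2 + (r ^ ((3*ρ+1)/4) + 1) * Real.exp (τ*r^ρ + r^((3*ρ-1)/2)) := by
    filter_upwards [eventually_ge_atTop (max 1 r₀)] with r hr
    have hr1 : (1:ℝ) ≤ r := le_trans (le_max_left _ _) hr
    have hrr₀ : r₀ ≤ r := le_trans (le_max_right _ _) hr
    apply maxMod_le (by linarith)
    intro z hz
    exact fF_norm_le ρ τ hρ0 hρ1 hτ0 hr1 (htail r hrr₀) (mem_cb.mp hz)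
  -- lower eventual bound for maxMod
  have hev1 : ∀ᶠ r in atTop, (1:ℝ) ≤ ρ*τ*r^ρ :=
    ((tendsto_rpow_atTop hρ0).const_mul_atTop
      (show (0:ℝ) < ρ*τ by positivity)).eventually_ge_atTop 1
  have hev2' : ∀ᶠ r in atTop, ρ*τ*r^(ρ-1) ≤ 1/2 := by
    have h : Tendsto (fun r : ℝ => ρ*τ*r^(ρ-1)) atTop (𝓝 0) := by
      have heq : (fun r : ℝ => ρ*τ*r^(ρ-1)) = fun r : ℝ => ρ*τ*r^(-(1-ρ)) := by
        funext r; congr 1; ring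
      rw [heq]
      simpa using (tendsto_rpow_neg_atTop (y := 1-ρ) (by linarith)).const_mul (ρ*τ)
    exact h.eventually_le_const (by norm_num)
  have hMlo : ∀ᶠ r in atTop,
      Real.exp (τ*r^ρ - 2*(ρ*τ)^2*r^(2*ρ-1) - 1/ρ) - 2 ≤ maxMod (fF ρ τ) r := by
    filter_upwards [eventually_ge_atTop (max 1 r₀), hev1, hev2'] with r hr h1 h2'
    have hr1 : (1:ℝ) ≤ r := le_trans (le_max_left _ _) hr
    have hr0 : (0:ℝ) < r := by linarith
    have hrr₀ : r₀ ≤ r := le_trans (le_max_right _ _) hr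
    have h2 : ρ*τ*r^ρ ≤ r/2 := by
      have hsplit : r^ρ = r^(ρ-1) * r := by
        nth_rewrite 3 [← Real.rpow_one r]
        rw [rpow_mul_rpow hr0]
        ring_nf
      rw [hsplit]
      calc ρ*τ*(r^(ρ-1)*r) = (ρ*τ*r^(ρ-1))*r := by ring
        _ ≤ (1/2)*r := mul_le_mul_of_nonneg_right h2' hr0.le
        _ = r/2 := by ring
    calc Real.exp (τ*r^ρ - 2*(ρ*τ)^2*r^(2*ρ-1) - 1/ρ) - 2
        ≤ ‖fF ρ τ ((r:ℝ):ℂ)‖ := fF_low ρ τ hρ0 hρ1 hτ0 hr1 (htail r hrr₀) h1 h2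
      _ ≤ maxMod (fF ρ τ) r := by
          apply le_maxMod hcont
          rw [mem_cb, Complex.norm_real, Real.norm_eq_abs, abs_of_pos hr0]
  have hcentral := central ρ τ hρ0 hρ1 hτ0 (maxMod (fF ρ τ)) hMup hMlo
  refine ⟨fF ρ τ, hdiff, ?_, ?_, ?_⟩
  · intro K hK
    have h := unif_on_compact ρ τ hρ0 hρ1 hτ0 hr₀1 htail K hK
    simpa only [hae] using h
  · exact (order_from_central ρ τ hρ0 hρ1 hτ0 _ hcentral).limsup_eq
  · exact ((EReal.tendsto_coe (a := τ)).mpr hcentral).limsup_eq
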